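/- arXiv:1907.02726 — 5 statements merged into one kernel-verified Lean document; each statement's English description precedes it below -/
import Mathlib

section
/- For natural numbers m, n ≥ 1, the Fibonacci polynomial F_m(x) divides F_n(x) if and only if m divides n. -/
/-!
Proof idea: the addition formula `F_{n+k+1} = F_{n+1} F_{k+1} + F_n F_k`, together with the
coprimality of consecutive `F_k`, shows that `F_m ∣ F_{n+m} ↔ F_m ∣ F_n`. Hence `F_m ∣ F_n`
iff `F_m ∣ F_{n % m}`, and for `0 < r < m` the polynomial `F_r` is nonzero of smaller degree
than `F_m`, so `F_m ∣ F_r` forces `r = 0`.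
-/

noncomputable def fibPoly (R : Type*) [CommRing R] : ℕ → Polynomial R
  | 0 => 0
  | 1 => 1
  | n + 2 => Polynomial.X * fibPoly R (n + 1) + fibPoly R n

open Polynomial

section CommRing

variable {R : Type*} [CommRing R]

@[simp] theorem fibPoly_zero : fibPoly R 0 = 0 := rfl

@[simp] theorem fibPoly_one : fibPoly R 1 = 1 := rfl

theorem fibPoly_add_two (n : ℕ) :
    fibPoly R (n + 2) = X * fibPoly R (n + 1) + fibPoly R n := rfl

theorem fibPoly_add (m n : ℕ) :
    fibPoly R (m + n + 1) = fibPoly R (m + 1) * fibPoly R (n + 1) + fibPoly R m * fibPoly R n := by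
  induction n generalizing m with
  | zero => simp
  | succ n ih =>
    rw [show m + (n + 1) + 1 = (m + 1) + n + 1 by omega, ih, fibPoly_add_two m, fibPoly_add_two n]
    ring

theorem isCoprime_fibPoly_succ (n : ℕ) : IsCoprime (fibPoly R n) (fibPoly R (n + 1)) := by
  induction n with
  | zero => simpa using isCoprime_zero_left.mpr isUnit_one
  | succ n ih =>
    rw [fibPoly_add_two]
    simpa [add_comm] using ih.symm.add_mul_right_right X

theorem fibPoly_dvd_add_self_iff (m n : ℕ) :
    fibPoly R m ∣ fibPoly R (n + m) ↔ fibPoly R m ∣ fibPoly R n := by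
  cases m with
  | zero => rfl
  | succ k =>
    rw [← add_assoc, fibPoly_add, dvd_add_right (dvd_mul_left _ _)]
    exact ⟨(isCoprime_fibPoly_succ k).symm.dvd_of_dvd_mul_right, fun h => h.mul_right _⟩

theorem fibPoly_dvd_add_mul_iff (m n q : ℕ) :
    fibPoly R m ∣ fibPoly R (n + m * q) ↔ fibPoly R m ∣ fibPoly R n := by
  induction q with
  | zero => rfl
  | succ q ih => rw [mul_add_one, ← add_assoc, fibPoly_dvd_add_self_iff, ih]

theorem fibPoly_dvd_iff_dvd_mod (m n : ℕ) :
    fibPoly R m ∣ fibPoly R n ↔ fibPoly R m ∣ fibPoly R (n % m) := by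
  conv_lhs => rw [← Nat.mod_add_div n m]
  exact fibPoly_dvd_add_mul_iff m (n % m) (n / m)

end CommRing

section Nontrivial

variable {R : Type*} [CommRing R] [Nontrivial R]

theorem monic_fibPoly_succ (n : ℕ) :
    (fibPoly R (n + 1)).Monic ∧ (fibPoly R (n + 1)).natDegree = n := by
  induction n using Nat.twoStepInduction with
  | zero => simp
  | one => simp [fibPoly_add_two]
  | more k ih₀ ih₁ =>
    have hXmonic : (X * fibPoly R (k + 2)).Monic := monic_X.mul ih₁.1
    have hXdeg : (X * fibPoly R (k + 2)).natDegree = k + 2 := by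
      rw [monic_X.natDegree_mul ih₁.1, natDegree_X, ih₁.2, add_comm]
    have hlt : (fibPoly R (k + 1)).degree < (X * fibPoly R (k + 2)).degree := by
      rw [degree_eq_natDegree hXmonic.ne_zero, hXdeg, degree_eq_natDegree ih₀.1.ne_zero, ih₀.2]
      exact_mod_cast (by omega : k < k + 2)
    rw [fibPoly_add_two]
    exact ⟨hXmonic.add_of_left hlt, (natDegree_add_eq_left_of_degree_lt hlt).trans hXdeg⟩

theorem fibPoly_eq_zero_iff {n : ℕ} : fibPoly R n = 0 ↔ n = 0 := by
  cases n with
  | zero => simp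
  | succ n => simpa using (monic_fibPoly_succ (R := R) n).1.ne_zero

theorem natDegree_fibPoly (n : ℕ) : (fibPoly R n).natDegree = n - 1 := by
  cases n with
  | zero => simp
  | succ n => exact (monic_fibPoly_succ n).2

end Nontrivial

theorem fibPoly_dvd_fibPoly_iff_of_lt {R : Type*} [CommRing R] [IsDomain R] {m r : ℕ}
    (hr : r < m) : fibPoly R m ∣ fibPoly R r ↔ r = 0 := by
  refine ⟨fun hdvd => ?_, by rintro rfl; exact dvd_zero _⟩
  by_contra hr0
  have := natDegree_le_of_dvd hdvd (fibPoly_eq_zero_iff.not.mpr hr0)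
  rw [natDegree_fibPoly, natDegree_fibPoly] at this
  omega

theorem fibPoly_dvd_iff_general (K : Type*) [Field K] (m n : ℕ) :
    fibPoly K m ∣ fibPoly K n ↔ m ∣ n := by
  rcases Nat.eq_zero_or_pos m with rfl | hm
  · simp [fibPoly_eq_zero_iff]
  · rw [fibPoly_dvd_iff_dvd_mod, fibPoly_dvd_fibPoly_iff_of_lt (Nat.mod_lt n hm),
      Nat.dvd_iff_mod_eq_zero]

theorem fibPoly_dvd_iff (K : Type*) [Field K] (m n : ℕ) (hm : 1 ≤ m) (hn : 1 ≤ n) :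
    fibPoly K m ∣ fibPoly K n ↔ m ∣ n :=
  fibPoly_dvd_iff_general K m n
end

section
/- Over F_2, Fibonacci polynomials satisfy the symmetric recursion relation F_{k+l}(x) + F_{k-l}(x) = x·F_k(x)·F_l(x) for all natural numbers k ≥ l. -/
open Polynomial

section

variable {R : Type*} [CommRing R]

variable [CharP R 2]

theorem fibPoly_add_two_add_self (n : ℕ) :
    fibPoly R (n + 2) + fibPoly R n = X * fibPoly R (n + 1) := by
  rw [fibPoly_add_two, add_assoc, CharTwo.add_self_eq_zero, add_zero]

theorem fibPoly_add_add_fibPoly_sub_of_charTwo (l : ℕ) :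
    ∀ k, l ≤ k → fibPoly R (k + l) + fibPoly R (k - l) = X * fibPoly R k * fibPoly R l := by
  induction l using Nat.twoStepInduction with
  | zero => simp [CharTwo.add_self_eq_zero]
  | one =>
    rintro k hk
    obtain ⟨j, rfl⟩ := Nat.exists_eq_add_of_le' hk
    simpa using fibPoly_add_two_add_self (R := R) j
  | more l ih₀ ih₁ =>
    rintro k hk
    obtain ⟨j, rfl⟩ := Nat.exists_eq_add_of_le' hk
    have h₁ := ih₁ (j + (l + 2)) (by omega)
    have h₀ := ih₀ (j + (l + 2)) (by omega)
    rw [show j + (l + 2) - (l + 1) = j + 1 by omega] at h₁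
    rw [show j + (l + 2) - l = j + 2 by omega] at h₀
    rw [show j + (l + 2) + (l + 2) = j + (l + 2) + l + 2 by omega, Nat.add_sub_cancel,
      fibPoly_add_two, fibPoly_add_two (R := R) l]
    linear_combination X * h₁ + h₀ - fibPoly_add_two (R := R) j
      - X * fibPoly R (j + 1) * CharTwo.two_eq_zero (R := R[X])

end

theorem fibPoly_symmetric_recursion (k l : ℕ) (hkl : l ≤ k) :
    fibPoly (ZMod 2) (k + l) + fibPoly (ZMod 2) (k - l) =
      Polynomial.X * fibPoly (ZMod 2) k * fibPoly (ZMod 2) l :=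
  fibPoly_add_add_fibPoly_sub_of_charTwo l k hkl
end

section
/- Over F_2, Fibonacci polynomials satisfy the subtractive relation F_{k+1}(x)·F_l(x) + F_k(x)·F_{l+1}(x) = F_{|k-l|}(x) for all natural numbers k, l. -/
/-! Over `𝔽₂` the signs of d'Ocagne's identity `F_{k+1} F_l - F_k F_{l+1} = (-1)^k F_{l-k}` disappear,
and the left-hand side becomes symmetric in `k` and `l`. -/

namespace fibPoly

variable {R : Type*} [CommRing R]

theorem add_two (n : ℕ) :
    fibPoly R (n + 2) = Polynomial.X * fibPoly R (n + 1) + fibPoly R n := by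
  rw [fibPoly]

theorem succ_mul_sub_mul_succ (k d : ℕ) :
    fibPoly R (k + 1) * fibPoly R (k + d) - fibPoly R k * fibPoly R (k + d + 1) =
      (-1) ^ k * fibPoly R d := by
  induction k with
  | zero => simp [fibPoly]
  | succ k ih =>
    rw [show k + 1 + d = k + d + 1 by omega, add_two, add_two (k + d), pow_succ]
    linear_combination -ih

theorem succ_mul_add_mul_succ_of_le [CharP R 2] {k l : ℕ} (h : k ≤ l) :
    fibPoly R (k + 1) * fibPoly R l + fibPoly R k * fibPoly R (l + 1) = fibPoly R (l - k) := by
  obtain ⟨d, rfl⟩ := Nat.exists_eq_add_of_le h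
  rw [Nat.add_sub_cancel_left, ← CharTwo.sub_eq_add, succ_mul_sub_mul_succ, CharTwo.neg_eq,
    one_pow, one_mul]

end fibPoly

theorem fibPoly_subtractive_recursion (k l : ℕ) :
    fibPoly (ZMod 2) (k + 1) * fibPoly (ZMod 2) l +
      fibPoly (ZMod 2) k * fibPoly (ZMod 2) (l + 1) =
      fibPoly (ZMod 2) (Nat.dist k l) := by
  wlog h : k ≤ l
  · rw [add_comm, mul_comm, mul_comm (fibPoly _ (k + 1)), Nat.dist_comm]
    exact this l k (by omega)
  rw [Nat.dist_eq_sub_of_le h]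
  exact fibPoly.succ_mul_add_mul_succ_of_le h
end

section
/- Let R be a commutative ring and let A, B, C, D be n×n matrices over R that pairwise commute. Then the 2n×2n block matrix [[A,B],[C,D]] is invertible if and only if AD - BC is invertible. -/
/-!
The blocks generate a commutative subalgebra `S` of `Mₙ(R)`, so `[[A, B], [C, D]]` is the image
of a `2 × 2` matrix over `S` whose determinant is `AD - BC`. Silvester's theorem on determinants
of block matrices with commuting blocks (`Matrix.det_det`) then gives
`det [[A, B], [C, D]] = det (AD - BC)`, and a square matrix over a commutative ring is a unit
exactly when its determinant is.
-/

namespace Matrix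

def finTwoProdEquivSum (n : Type*) : Fin 2 × n ≃ n ⊕ n :=
  (finTwoEquiv.prodCongr (.refl n)).trans (Equiv.boolProdEquivSum n)

theorem fromBlocks_eq_reindex_comp {n α : Type*} (A B C D : Matrix n n α) :
    fromBlocks A B C D =
      reindex (finTwoProdEquivSum n) (finTwoProdEquivSum n)
        (comp (Fin 2) (Fin 2) n n α !![A, B; C, D]) := by
  ext (i | i) (j | j) <;> rfl

open scoped IsMulCommutative in
theorem det_fromBlocks_of_commute {R n : Type*} [CommRing R] [Fintype n] [DecidableEq n]
    (A B C D : Matrix n n R)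
    (hAB : Commute A B) (hAC : Commute A C) (hAD : Commute A D)
    (hBC : Commute B C) (hBD : Commute B D) (hCD : Commute C D) :
    (fromBlocks A B C D).det = (A * D - B * C).det := by
  let s : Set (Matrix n n R) := {A, B, C, D}
  have hs : ∀ x ∈ s, ∀ y ∈ s, x * y = y * x := by
    simp only [s, Set.mem_insert_iff, Set.mem_singleton_iff]
    rintro x (rfl | rfl | rfl | rfl) y (rfl | rfl | rfl | rfl) <;>
      first | rfl | exact Commute.eq ‹_› | exact (Commute.eq ‹_›).symm
  have := Algebra.isMulCommutative_adjoin R hs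
  let f : Algebra.adjoin R s →+* Matrix n n R := (Algebra.adjoin R s).val.toRingHom
  let a : Algebra.adjoin R s := ⟨A, Algebra.subset_adjoin (by simp [s])⟩
  let b : Algebra.adjoin R s := ⟨B, Algebra.subset_adjoin (by simp [s])⟩
  let c : Algebra.adjoin R s := ⟨C, Algebra.subset_adjoin (by simp [s])⟩
  let d : Algebra.adjoin R s := ⟨D, Algebra.subset_adjoin (by simp [s])⟩
  have hdet : f !![a, b; c, d].det = A * D - B * C := by
    rw [det_fin_two_of]; rfl
  have hmap : !![a, b; c, d].map f = !![A, B; C, D] := by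
    ext i j; fin_cases i <;> fin_cases j <;> rfl
  rw [fromBlocks_eq_reindex_comp, det_reindex_self, ← hmap, ← det_det, hdet]

end Matrix

theorem blockMatrix_isUnit_iff (R : Type*) [CommRing R] (n : ℕ)
    (A B C D : Matrix (Fin n) (Fin n) R)
    (hAB : Commute A B) (hAC : Commute A C) (hAD : Commute A D)
    (hBC : Commute B C) (hBD : Commute B D) (hCD : Commute C D) :
    IsUnit (Matrix.fromBlocks A B C D) ↔ IsUnit (A * D - B * C) := by
  rw [Matrix.isUnit_iff_isUnit_det, Matrix.isUnit_iff_isUnit_det,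
    Matrix.det_fromBlocks_of_commute A B C D hAB hAC hAD hBC hBD hCD]
end

section
/- Let K be a field of characteristic 2, S ∈ M_n(K) with characteristic polynomial χ_S. Then the characteristic polynomial of S' = [[S, I_n],[I_n, 0_n]] ∈ M_{2n}(K) equals x^n · χ_S(x + x⁻¹) (interpreted as the polynomial x^n·χ_S evaluated formally at x - x⁻¹, which is polynomial since the Laurent part cancels); i.e. χ_{S'}(x) = x^n χ_S(x - x^{-1}). -/
/-! Evaluate both characteristic polynomials in `K(X)` as determinants of `X • 1 - M`. For `S'`
this is the block matrix `[[X - S, -1], [-1, X]]`, whose Schur complement with respect to the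
invertible block `X • 1` is `X - S - X⁻¹ • 1`; hence `χ_{S'}(X) = Xⁿ · det ((X - X⁻¹) • 1 - S)`. -/

open Polynomial Matrix

namespace Matrix

variable {n A : Type*} [Fintype n] [DecidableEq n] [CommRing A]

theorem aeval_charpoly {R : Type*} [CommRing R] [Algebra R A] (M : Matrix n n R) (t : A) :
    aeval t M.charpoly = (scalar n t - M.map (algebraMap R A)).det := by
  rw [← eval_map_algebraMap, ← charpoly_map, eval_charpoly]

theorem scalar_sub_fromBlocks_one_one_zero (M : Matrix n n A) (t : A) :
    scalar (n ⊕ n) t - fromBlocks M 1 1 0 =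
      fromBlocks (scalar n t - M) (-1) (-1) (scalar n t) := by
  ext (i | i) (j | j) <;> simp [one_apply, diagonal_apply]

theorem det_fromBlocks_neg_one_neg_one_scalar {L : Type*} [Field L] (M : Matrix n n L)
    {t : L} (ht : t ≠ 0) :
    (fromBlocks M (-1) (-1) (scalar n t)).det = t ^ Fintype.card n * (M - scalar n t⁻¹).det := by
  have := invertibleOfNonzero ht
  have := Invertible.map (scalar n) t
  rw [det_fromBlocks₂₂, ← map_invOf, invOf_eq_inv, neg_one_mul, mul_neg_one, neg_neg]
  simp

end Matrix

theorem charpoly_doubling_general (K : Type*) [Field K] (n : ℕ)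
    (S : Matrix (Fin n) (Fin n) K) :
    algebraMap (Polynomial K) (RatFunc K)
        (Matrix.charpoly
          (Matrix.fromBlocks S (1 : Matrix (Fin n) (Fin n) K)
            (1 : Matrix (Fin n) (Fin n) K) (0 : Matrix (Fin n) (Fin n) K))) =
      RatFunc.X ^ n *
        Polynomial.aeval (RatFunc.X - RatFunc.X⁻¹) (Matrix.charpoly S) := by
  let S_X : Matrix (Fin n) (Fin n) (RatFunc K) := S.map (algebraMap K (RatFunc K))
  calc _ = aeval RatFunc.X (fromBlocks S 1 1 0).charpoly := by
        rw [← RatFunc.algebraMap_X, aeval_algebraMap_apply, aeval_X_left_apply]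
    _ = (fromBlocks (scalar _ RatFunc.X - S_X) (-1) (-1) (scalar _ RatFunc.X)).det := by
        rw [aeval_charpoly, fromBlocks_map, Matrix.map_one _ (map_zero _) (map_one _),
          Matrix.map_zero _ (map_zero _), scalar_sub_fromBlocks_one_one_zero]
    _ = RatFunc.X ^ n * (scalar _ (RatFunc.X - RatFunc.X⁻¹) - S_X).det := by
        rw [det_fromBlocks_neg_one_neg_one_scalar _ RatFunc.X_ne_zero, Fintype.card_fin, map_sub,
          sub_right_comm]
    _ = _ := by rw [aeval_charpoly]

theorem charpoly_doubling (K : Type*) [Field K] [CharP K 2] (n : ℕ)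
    (S : Matrix (Fin n) (Fin n) K) :
    algebraMap (Polynomial K) (RatFunc K)
        (Matrix.charpoly
          (Matrix.fromBlocks S (1 : Matrix (Fin n) (Fin n) K)
            (1 : Matrix (Fin n) (Fin n) K) (0 : Matrix (Fin n) (Fin n) K))) =
      RatFunc.X ^ n *
        Polynomial.aeval (RatFunc.X - RatFunc.X⁻¹) (Matrix.charpoly S) :=
  charpoly_doubling_general K n S
end
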